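/- Let bx be a transparent well-behaved bx over a lawful monad m with state S between A and B, given by readL, readR, setL, setR, and let identity denote the transparent bx on A with state A, readL = readR = id and setL = setR = set. Let h : S → A × S be h s = (readL s, s). Then h conjugates bx onto the composite identity ⨟ bx: for all a' : A, b' : B and s : S, (identity ⨟ bx).setL a' (h s) = (do let (_, s') ← setL a' s; pure (⟨⟩, h s')); (identity ⨟ bx).setR b' (h s) = (do let (_, s') ← setR b' s; pure (⟨⟩, h s')); (identity ⨟ bx).getL (h s) = pure (readL s, h s); and (identity ⨟ bx).getR (h s) = pure (readR s, h s). (These are the component equations witnessing the bx isomorphism identity ⨟ bx ≡ bx from the identity law of composition.) -/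

import Mathlib

universe u v

def getsS {m : Type u → Type v} [Monad m] {σ α : Type u} (f : σ → α) : StateT σ m α := do
  let s ← get
  pure (f s)

/-- A transparent bidirectional transformation over the monad `m`,
with state space `S`, between `A` and `B`. -/
structure TBX (m : Type u → Type v) (S A B : Type u) where
  readL : S → A
  readR : S → B
  setL : A → StateT S m PUnit
  setR : B → StateT S m PUnit

/-- Well-behavedness of a transparent bx: the laws (S_LG_L), (G_LS_L), (S_RG_R), (G_RS_R).
(The get–get laws hold automatically since the gets are `T`-pure queries.) -/
structure TBX.WellBehaved {m : Type u → Type v} [Monad m] {S A B : Type u}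
    (bx : TBX m S A B) : Prop where
  slgl : ∀ a : A, (do bx.setL a; getsS (m := m) bx.readL) = (do bx.setL a; pure a)
  glsl : (do let a ← getsS (m := m) bx.readL; bx.setL a) = (pure PUnit.unit : StateT S m PUnit)
  srgr : ∀ b : B, (do bx.setR b; getsS (m := m) bx.readR) = (do bx.setR b; pure b)
  grsr : (do let b ← getsS (m := m) bx.readR; bx.setR b) = (pure PUnit.unit : StateT S m PUnit)

/-- Composition of transparent bx. -/
def TBX.comp {m : Type u → Type v} [Monad m] {S₁ S₂ A B C : Type u}
    (bx₁ : TBX m S₁ A B) (bx₂ : TBX m S₂ B C) : TBX m (S₁ × S₂) A C where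
  readL := fun s => bx₁.readL s.1
  readR := fun s => bx₂.readR s.2
  setL := fun a' => fun s => do
    let (_, s₁') ← (bx₁.setL a').run s.1
    let (_, s₂') ← (bx₂.setL (bx₁.readR s₁')).run s.2
    pure (PUnit.unit, (s₁', s₂'))
  setR := fun c' => fun s => do
    let (_, s₂') ← (bx₂.setR c').run s.2
    let (_, s₁') ← (bx₁.setR (bx₂.readL s₂')).run s.1
    pure (PUnit.unit, (s₁', s₂'))

/-- The identity bx on `A`, with state `A`. -/
def TBX.identity (m : Type u → Type v) [Monad m] (A : Type u) : TBX m A A A where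
  readL := id
  readR := id
  setL := fun a => set a
  setR := fun a => set a

/-! The identity component only ever stores the value last written to it. After `setL a'` that
value is `a'`, which by (S_LG_L) is what `bx.readL` reads off the new state; after `setR b'` it
is `bx.readL` of the new state by construction of the composite. So states of the form
`(bx.readL s, s)` are preserved, and on them the composite behaves exactly like `bx`. -/

theorem getsS_run {m : Type u → Type v} [Monad m] [LawfulMonad m] {σ α : Type u}
    (f : σ → α) (s : σ) : (getsS (m := m) f).run s = pure (f s, s) := by
  simp [getsS]

namespace TBX

variable {m : Type u → Type v} [Monad m] [LawfulMonad m] {S A B : Type u}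

theorem WellBehaved.run_setL_bind_readL {bx : TBX m S A B} (hwb : bx.WellBehaved)
    (a : A) (s : S) {β : Type u} (k : A → S → m β) :
    ((bx.setL a).run s >>= fun p => k (bx.readL p.2) p.2) =
      ((bx.setL a).run s >>= fun p => k a p.2) := by
  have h := congrArg (fun t => t.run s >>= fun p => k p.1 p.2) (hwb.slgl a)
  simpa [getsS_run] using h

theorem identity_comp_setL_run (bx : TBX m S A B) (a a' : A) (s : S) :
    (((identity m A).comp bx).setL a').run (a, s) =
      (do let (_, s') ← (bx.setL a').run s
          pure (PUnit.unit, (a', s'))) := by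
  simp [comp, identity, StateT.run, set, StateT.set]

theorem identity_comp_setR_run (bx : TBX m S A B) (a : A) (b' : B) (s : S) :
    (((identity m A).comp bx).setR b').run (a, s) =
      (do let (_, s') ← (bx.setR b').run s
          pure (PUnit.unit, (bx.readL s', s'))) := by
  simp [comp, identity, StateT.run, set, StateT.set]

end TBX

theorem identity_comp_iso
    {m : Type u → Type v} [Monad m] [LawfulMonad m] {S A B : Type u}
    (bx : TBX m S A B) (hwb : bx.WellBehaved) :
    (∀ (a' : A) (s : S),
      (((TBX.identity m A).comp bx).setL a').run (bx.readL s, s) =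
        (do let (_, s') ← (bx.setL a').run s
            pure (PUnit.unit, (bx.readL s', s')))) ∧
    (∀ (b' : B) (s : S),
      (((TBX.identity m A).comp bx).setR b').run (bx.readL s, s) =
        (do let (_, s') ← (bx.setR b').run s
            pure (PUnit.unit, (bx.readL s', s')))) ∧
    (∀ s : S,
      (getsS (m := m) ((TBX.identity m A).comp bx).readL).run (bx.readL s, s) =
        pure (bx.readL s, (bx.readL s, s))) ∧
    (∀ s : S,
      (getsS (m := m) ((TBX.identity m A).comp bx).readR).run (bx.readL s, s) =
        pure (bx.readR s, (bx.readL s, s))) := by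
  refine ⟨fun a' s => ?_, fun b' s => TBX.identity_comp_setR_run bx _ b' s,
    fun s => getsS_run _ _, fun s => getsS_run _ _⟩
  rw [TBX.identity_comp_setL_run]
  exact (hwb.run_setL_bind_readL a' s fun a s' => pure (PUnit.unit, (a, s'))).symm
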